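/- arXiv:2005.13726 — 2 statements merged into one kernel-verified Lean document; each statement's English description precedes it below -/
import Mathlib

section
/- Let P ∈ ℤ[X] be monic and irreducible. Then M(P) = 1 if and only if P(X) = X or P is a cyclotomic polynomial. -/
/-- Mahler measure of a complex polynomial. -/
noncomputable def mahlerMeasure (P : Polynomial ℂ) : ℝ :=
  (P.roots.map (fun z => max 1 ‖z‖)).prod

/-!
A polynomial with integer coefficients and Mahler measure 1 either is divisible by `X` or, by
Kronecker's theorem (`Polynomial.cyclotomic_dvd_of_mahlerMeasure_eq_one`), has all its roots on
the unit circle, hence roots of unity, so that it is divisible by a cyclotomic polynomial.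
A monic irreducible polynomial divisible by the monic irreducible `X` or `Φₙ` is equal to it.
Conversely, `X` and the cyclotomic polynomials have all their roots in the closed unit disc.
-/

theorem mahlerMeasure_eq_of_monic {p : Polynomial ℂ} (hp : p.Monic) :
    mahlerMeasure p = p.mahlerMeasure := by
  rw [p.mahlerMeasure_eq_leadingCoeff_mul_prod_roots, hp.leadingCoeff, norm_one, one_mul,
    mahlerMeasure]

theorem Polynomial.Monic.eq_of_irreducible_of_dvd {R : Type*} [CommSemiring R]
    {p q : Polynomial R} (hp : p.Monic) (hq : q.Monic) (hp_irr : Irreducible p)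
    (hq_irr : Irreducible q) (hdvd : q ∣ p) : p = q :=
  (eq_of_monic_of_associated hq hp (hq_irr.associated_of_dvd hp_irr hdvd)).symm

/-- Kronecker's theorem: a monic irreducible integer polynomial has Mahler
measure 1 iff it is X or a cyclotomic polynomial. -/
theorem mahler_eq_one_iff (P : Polynomial ℤ) (hm : P.Monic) (hirr : Irreducible P) :
    mahlerMeasure (P.map (Int.castRingHom ℂ)) = 1 ↔
      P = Polynomial.X ∨ ∃ n : ℕ, 0 < n ∧ P = Polynomial.cyclotomic n ℤ := by
  open Polynomial in
  rw [mahlerMeasure_eq_of_monic (hm.map _)]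
  constructor
  · intro h
    by_cases hX : X ∣ P
    · exact .inl (hm.eq_of_irreducible_of_dvd monic_X hirr irreducible_X hX)
    obtain ⟨n, hn, hdvd⟩ := cyclotomic_dvd_of_mahlerMeasure_eq_one h hX
      (hm.degree_pos_of_not_isUnit hirr.not_isUnit).ne'
    exact .inr ⟨n, hn, hm.eq_of_irreducible_of_dvd (cyclotomic.monic n ℤ) hirr
      (cyclotomic.irreducible hn) hdvd⟩
  · rintro (rfl | ⟨n, -, rfl⟩)
    · simpa using mahlerMeasure_X_sub_C 0
    · simpa [algebraMap_int_eq] using cyclotomic_mahlerMeasure_eq_one (R := ℤ) n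
end

section
/- If α is an algebraic integer all of whose conjugates in ℂ (including α itself) have absolute value 1, then α is a root of unity. -/
/-!
Every complex embedding of the number field `ℚ(α)` sends `α` to one of its conjugates, so `α` has
absolute value 1 under every embedding. The same then holds for all powers of `α`, whose minimal
polynomials therefore have bounded degree and bounded integer coefficients; there are finitely many
such polynomials, so two powers of `α` coincide.
-/

open Polynomial IntermediateField NumberField

theorem RingHom.apply_mem_roots_map_minpoly_rat {K L : Type*} [Field K] [CharZero K] [Field L]
    [CharZero L] (φ : K →+* L) {x : K} (hx : _root_.IsIntegral ℚ x) :
    φ x ∈ ((minpoly ℚ x).map (algebraMap ℚ L)).roots := by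
  rw [mem_roots (map_ne_zero (minpoly.ne_zero hx)), IsRoot, eval_map_algebraMap]
  exact (aeval_algHom_apply φ.toRatAlgHom x _).trans (by rw [minpoly.aeval, map_zero])

/-- Kronecker's theorem: an algebraic integer all of whose conjugates in ℂ
(including itself) have absolute value 1 is a root of unity. -/
theorem kronecker_root_of_unity (α : ℂ) (hα : IsIntegral ℤ α)
    (h : ∀ z ∈ ((minpoly ℚ α).map (algebraMap ℚ ℂ)).roots, ‖z‖ = 1) :
    ∃ n : ℕ, 0 < n ∧ α ^ n = 1 := by
  have : FiniteDimensional ℚ ℚ⟮α⟯ := adjoin.finiteDimensional hα.tower_top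
  have : NumberField ℚ⟮α⟯ := ⟨⟩
  have hgen : IsIntegral ℤ (AdjoinSimple.gen ℚ α) := by
    rwa [← isIntegral_algebraMap_iff (algebraMap ℚ⟮α⟯ ℂ).injective, AdjoinSimple.algebraMap_gen]
  have hconj (φ : ℚ⟮α⟯ →+* ℂ) : ‖φ (AdjoinSimple.gen ℚ α)‖ = 1 :=
    h _ (minpoly_gen ℚ α ▸ φ.apply_mem_roots_map_minpoly_rat (Algebra.IsIntegral.isIntegral _))
  obtain ⟨n, hn, hpow⟩ := Embeddings.pow_eq_one_of_norm_eq_one ℚ⟮α⟯ ℂ hgen hconj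
  refine ⟨n, hn, ?_⟩
  rw [← AdjoinSimple.algebraMap_gen ℚ α, ← map_pow, hpow, map_one]
end
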